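/- arXiv:1806.09620 — 4 statements merged into one kernel-verified Lean document; each statement's English description precedes it below -/
import Mathlib

section
/- Under the same assumptions, x* ∈ X is a local minimizer of F if and only if (x*, g(x*)) is a local minimizer of φ over Ω. -/
/-!
If `φ (x, z)` is monotone in `z`, then on the epigraph `{(x, z) | x ∈ X, g x ≤ z}` it is bounded
below by its value `F x = φ (x, g x)` on the graph of `g`. Projecting the
epigraph onto `X` and lifting `X` onto the graph of the continuous map `g` are both continuous,
so local minimality transfers in both directions.
-/

open Filter Topology

section Epigraph

variable {E Z β : Type*} [TopologicalSpace E] [TopologicalSpace Z] [Preorder Z] [Preorder β]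
  {Φ : E × Z → β} {G : E → Z} {X : Set E} {x : E}

theorem IsLocalMinOn.epigraph_of_monotone (hΦ : ∀ y, Monotone fun z => Φ (y, z))
    (hmin : IsLocalMinOn (fun y => Φ (y, G y)) X x) :
    IsLocalMinOn Φ {p | p.1 ∈ X ∧ G p.1 ≤ p.2} (x, G x) := by
  have hfst : Tendsto Prod.fst (𝓝[{p | p.1 ∈ X ∧ G p.1 ≤ p.2}] (x, G x)) (𝓝[X] x) :=
    continuous_fst.continuousWithinAt.tendsto_nhdsWithin fun _ hp => hp.1
  have hgraph : IsLocalMinOn (fun p : E × Z => Φ (p.1, G p.1)) {p | p.1 ∈ X ∧ G p.1 ≤ p.2}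
      (x, G x) := IsMinFilter.comp_tendsto (g := Prod.fst) (b := (x, G x)) hmin hfst
  refine EventuallyLE.isMinFilter (f := fun p : E × Z => Φ (p.1, G p.1)) ?_ rfl hgraph
  filter_upwards [self_mem_nhdsWithin] with p hp
  exact hΦ p.1 hp.2

theorem IsLocalMinOn.of_epigraph (hG : Continuous G)
    (hmin : IsLocalMinOn Φ {p | p.1 ∈ X ∧ G p.1 ≤ p.2} (x, G x)) :
    IsLocalMinOn (fun y => Φ (y, G y)) X x :=
  IsMinFilter.comp_tendsto (g := fun y => (y, G y)) hmin <|
    (continuous_id.prodMk hG).continuousWithinAt.tendsto_nhdsWithin fun _ hy => ⟨hy, le_rfl⟩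

theorem isLocalMinOn_iff_isLocalMinOn_epigraph (hΦ : ∀ y, Monotone fun z => Φ (y, z))
    (hG : Continuous G) :
    IsLocalMinOn (fun y => Φ (y, G y)) X x ↔
      IsLocalMinOn Φ {p | p.1 ∈ X ∧ G p.1 ≤ p.2} (x, G x) :=
  ⟨IsLocalMinOn.epigraph_of_monotone hΦ, IsLocalMinOn.of_epigraph hG⟩

end Epigraph

theorem local_minimizer_equivalence_general
    (m : ℕ) (ni : Fin m → ℕ)
    (X : Set (∀ i, EuclideanSpace ℝ (Fin (ni i))))
    (f : (∀ i, EuclideanSpace ℝ (Fin (ni i))) → ℝ)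
    (g : ∀ i, EuclideanSpace ℝ (Fin (ni i)) → ℝ)
    (hgcont : ∀ i, Continuous (g i))
    (h : Fin m → ℝ → ℝ)
    (hmono : ∀ i, Monotone (h i))
    (F : (∀ i, EuclideanSpace ℝ (Fin (ni i))) → ℝ)
    (hF : F = fun x => f x + ∑ i, h i (g i (x i)))
    (φ : ((∀ i, EuclideanSpace ℝ (Fin (ni i))) × (Fin m → ℝ)) → ℝ)
    (hφ : φ = fun p => f p.1 + ∑ i, h i (p.2 i))
    (Ω : Set ((∀ i, EuclideanSpace ℝ (Fin (ni i))) × (Fin m → ℝ)))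
    (hΩ : Ω = {p | p.1 ∈ X ∧ ∀ i, g i (p.1 i) ≤ p.2 i})
    (xstar : ∀ i, EuclideanSpace ℝ (Fin (ni i))) :
    IsLocalMinOn F X xstar ↔
      IsLocalMinOn φ Ω (xstar, fun i => g i (xstar i)) := by
  subst hF hφ hΩ
  have hφmono (x : ∀ i, EuclideanSpace ℝ (Fin (ni i))) :
      Monotone fun z : Fin m → ℝ => f x + ∑ i, h i (z i) := fun _ _ hz =>
    add_le_add_right (Finset.sum_le_sum fun i _ => hmono i (hz i)) _
  exact isLocalMinOn_iff_isLocalMinOn_epigraph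
    (Φ := fun p : _ × (Fin m → ℝ) => f p.1 + ∑ i, h i (p.2 i)) hφmono
    (continuous_pi fun i => (hgcont i).comp (continuous_apply i))

theorem local_minimizer_equivalence
    (m : ℕ) (ni : Fin m → ℕ)
    (X : Set (∀ i, EuclideanSpace ℝ (Fin (ni i))))
    (hXclosed : IsClosed X) (hXconv : Convex ℝ X)
    (f : (∀ i, EuclideanSpace ℝ (Fin (ni i))) → ℝ)
    (g : ∀ i, EuclideanSpace ℝ (Fin (ni i)) → ℝ)
    (hgcont : ∀ i, Continuous (g i))
    (hgconv : ∀ i, ConvexOn ℝ Set.univ (g i))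
    (h : Fin m → ℝ → ℝ)
    (hmono : ∀ i, Monotone (h i))
    (hcont : ∀ i, Continuous (h i))
    (F : (∀ i, EuclideanSpace ℝ (Fin (ni i))) → ℝ)
    (hF : F = fun x => f x + ∑ i, h i (g i (x i)))
    (φ : ((∀ i, EuclideanSpace ℝ (Fin (ni i))) × (Fin m → ℝ)) → ℝ)
    (hφ : φ = fun p => f p.1 + ∑ i, h i (p.2 i))
    (Ω : Set ((∀ i, EuclideanSpace ℝ (Fin (ni i))) × (Fin m → ℝ)))
    (hΩ : Ω = {p | p.1 ∈ X ∧ ∀ i, g i (p.1 i) ≤ p.2 i})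
    (xstar : ∀ i, EuclideanSpace ℝ (Fin (ni i)))
    (hxstar : xstar ∈ X) :
    IsLocalMinOn F X xstar ↔
      IsLocalMinOn φ Ω (xstar, fun i => g i (xstar i)) :=
  local_minimizer_equivalence_general m ni X f g hgcont h hmono F hF φ hφ Ω hΩ xstar
end

section
/- Suppose at iteration k of DCA-Like the backtracking condition H_{μ_k}(x^{k+1}, g(x^{k+1})) ≥ H_{μ_k}(x^k, g(x^k)) + ⟨μ_k x^k − ∇f(x^k), x^{k+1} − x^k⟩ + ⟨ξ^k, g(x^{k+1}) − g(x^k)⟩ holds and x^{k+1} minimizes G_{μ_k}(x,z) − ⟨y^k, x⟩ − ⟨ξ^k, z⟩ over Ω. Then φ(x^k, g(x^k)) − φ(x^{k+1}, g(x^{k+1})) ≥ (μ_k/2)‖x^{k+1} − x^k‖². -/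
/-!
The set `Ω` is convex and the subproblem objective is `μ/2 ‖x‖²` plus a linear function, so a
minimiser `p₀` over `Ω` beats every feasible `p` by at least `μ/2 ‖p.1 - p₀.1‖²`: along the
segment from `p₀` to `p` the objective rises by `a t + b t²` with `b = μ/2 ‖p.1 - p₀.1‖²`, and
minimality at `t = 0` forces `a ≥ 0`. Applied to `p = (xᵏ, g(xᵏ))` and added to the
backtracking inequality, this is the sufficient decrease.
-/

open Filter Topology

theorem nonneg_of_forall_mem_Ioc_mul_add_mul_sq_nonneg {a b : ℝ}
    (h : ∀ t ∈ Set.Ioc (0 : ℝ) 1, 0 ≤ a * t + b * t ^ 2) : 0 ≤ a := by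
  have hlim : Tendsto (fun t : ℝ => a + b * t) (𝓝[>] 0) (𝓝 a) := by
    have : Continuous fun t : ℝ => a + b * t := by fun_prop
    simpa using (this.tendsto 0).mono_left nhdsWithin_le_nhds
  refine ge_of_tendsto hlim ?_
  filter_upwards [Ioc_mem_nhdsGT one_pos] with t ht
  nlinarith [h t ht, ht.1]

theorem convex_setOf_mem_and_forall_le {ι E : Type*} [AddCommGroup E] [Module ℝ E]
    {X : Set E} (hX : Convex ℝ X) {G : ι → E → ℝ} (hG : ∀ i, ConvexOn ℝ X (G i)) :
    Convex ℝ {p : E × (ι → ℝ) | p.1 ∈ X ∧ ∀ i, G i p.1 ≤ p.2 i} := by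
  rintro p ⟨hpX, hpG⟩ q ⟨hqX, hqG⟩ a b ha hb hab
  refine ⟨hX hpX hqX ha hb hab, fun i => ?_⟩
  calc G i (a • p.1 + b • q.1) ≤ a * G i p.1 + b * G i q.1 := (hG i).2 hpX hqX ha hb hab
    _ ≤ a * p.2 i + b * q.2 i := by gcongr; exacts [hpG i, hqG i]

theorem sq_norm_sub_le_of_isMinOn {E F : Type*} [NormedAddCommGroup E] [InnerProductSpace ℝ E]
    [AddCommGroup F] [Module ℝ F] {S : Set (E × F)} (hS : Convex ℝ S) (μ : ℝ)
    (ℓ : E × F →ₗ[ℝ] ℝ) {p₀ p : E × F} (hp₀ : p₀ ∈ S) (hp : p ∈ S)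
    (hmin : IsMinOn (fun q : E × F => μ / 2 * ‖q.1‖ ^ 2 - ℓ q) S p₀) :
    μ / 2 * ‖p.1 - p₀.1‖ ^ 2 ≤ (μ / 2 * ‖p.1‖ ^ 2 - ℓ p) - (μ / 2 * ‖p₀.1‖ ^ 2 - ℓ p₀) := by
  set d := p.1 - p₀.1
  have hslope : 0 ≤ μ * inner ℝ p₀.1 d - ℓ (p - p₀) := by
    refine nonneg_of_forall_mem_Ioc_mul_add_mul_sq_nonneg (b := μ / 2 * ‖d‖ ^ 2) fun t ht => ?_
    have hle := isMinOn_iff.mp hmin _ (hS.add_smul_sub_mem hp₀ hp ⟨ht.1.le, ht.2⟩)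
    simp only [Prod.fst_add, Prod.smul_fst, Prod.fst_sub, map_add, map_smul, smul_eq_mul,
      norm_add_sq_real, inner_smul_right, norm_smul, mul_pow, Real.norm_eq_abs, sq_abs] at hle
    linear_combination hle
  have hp_eq : p = p₀ + (p - p₀) := by abel
  conv_rhs => rw [hp_eq]
  simp only [Prod.fst_add, Prod.fst_sub, map_add, norm_add_sq_real]
  linear_combination hslope

theorem dca_like_sufficient_decrease_general
    (m : ℕ) (ni : Fin m → ℕ)
    (X : Set (PiLp 2 fun i : Fin m => EuclideanSpace ℝ (Fin (ni i))))
    (hXconv : Convex ℝ X)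
    (f : (PiLp 2 fun i : Fin m => EuclideanSpace ℝ (Fin (ni i))) → ℝ)
    (g : ∀ i, EuclideanSpace ℝ (Fin (ni i)) → ℝ)
    (hgconv : ∀ i, ConvexOn ℝ Set.univ (g i))
    (h : Fin m → ℝ → ℝ)
    (μ : ℝ)
    (Ω : Set ((PiLp 2 fun i : Fin m => EuclideanSpace ℝ (Fin (ni i))) × (Fin m → ℝ)))
    (hΩ : Ω = {p | p.1 ∈ X ∧ ∀ i, g i (p.1 i) ≤ p.2 i})
    (H : (PiLp 2 fun i : Fin m => EuclideanSpace ℝ (Fin (ni i))) → (Fin m → ℝ) → ℝ)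
    (hH : H = fun x z => μ / 2 * ‖x‖ ^ 2 - f x - ∑ i, h i (z i))
    (xk xk1 : PiLp 2 fun i : Fin m => EuclideanSpace ℝ (Fin (ni i)))
    (hxk : xk ∈ X)
    (ξ : Fin m → ℝ)
    (yk : PiLp 2 fun i : Fin m => EuclideanSpace ℝ (Fin (ni i)))
    -- backtracking condition (5)
    (hback : H xk1 (fun i => g i (xk1 i)) ≥
      H xk (fun i => g i (xk i)) + inner ℝ yk (xk1 - xk) +
        ∑ i, ξ i * (g i (xk1 i) - g i (xk i)))
    -- (xᵏ⁺¹, g(xᵏ⁺¹)) minimizes the convex subproblem over Ω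
    (hmem : (xk1, fun i => g i (xk1 i)) ∈ Ω)
    (hmin : ∀ p ∈ Ω,
      μ / 2 * ‖xk1‖ ^ 2 - inner ℝ yk xk1 - ∑ i, ξ i * g i (xk1 i) ≤
        μ / 2 * ‖p.1‖ ^ 2 - inner ℝ yk p.1 - ∑ i, ξ i * p.2 i) :
    (f xk + ∑ i, h i (g i (xk i))) - (f xk1 + ∑ i, h i (g i (xk1 i))) ≥
      μ / 2 * ‖xk1 - xk‖ ^ 2 := by
  subst hΩ hH
  have hΩconv := convex_setOf_mem_and_forall_le (G := fun i x => g i (x i)) hXconv fun i =>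
    ((hgconv i).comp_linearMap
      (PiLp.projₗ (𝕜 := ℝ) (β := fun i => EuclideanSpace ℝ (Fin (ni i))) 2 i)).subset
      (Set.subset_univ X) hXconv
  let ℓ := (innerₛₗ ℝ yk).coprod (∑ i, ξ i • LinearMap.proj (R := ℝ) (φ := fun _ : Fin m => ℝ) i)
  have hℓ (p : _ × (Fin m → ℝ)) : ℓ p = inner ℝ yk p.1 + ∑ i, ξ i * p.2 i := by
    simp [ℓ]
  have hgrowth := sq_norm_sub_le_of_isMinOn hΩconv μ ℓ hmem
    (p := (xk, fun i => g i (xk i))) ⟨hxk, fun i => le_rfl⟩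
    (isMinOn_iff.mpr fun p hp => by simpa only [hℓ, sub_sub] using hmin p hp)
  simp only [hℓ, norm_sub_rev xk] at hgrowth
  simp only [inner_sub_right, mul_sub, Finset.sum_sub_distrib] at hback
  linarith

theorem dca_like_sufficient_decrease
    (m : ℕ) (ni : Fin m → ℕ)
    (X : Set (PiLp 2 fun i : Fin m => EuclideanSpace ℝ (Fin (ni i))))
    (hXconv : Convex ℝ X)
    (f : (PiLp 2 fun i : Fin m => EuclideanSpace ℝ (Fin (ni i))) → ℝ)
    (hf : Differentiable ℝ f)
    (g : ∀ i, EuclideanSpace ℝ (Fin (ni i)) → ℝ)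
    (hgconv : ∀ i, ConvexOn ℝ Set.univ (g i))
    (h : Fin m → ℝ → ℝ)
    (μ : ℝ) (hμ : 0 < μ)
    (Ω : Set ((PiLp 2 fun i : Fin m => EuclideanSpace ℝ (Fin (ni i))) × (Fin m → ℝ)))
    (hΩ : Ω = {p | p.1 ∈ X ∧ ∀ i, g i (p.1 i) ≤ p.2 i})
    (H : (PiLp 2 fun i : Fin m => EuclideanSpace ℝ (Fin (ni i))) → (Fin m → ℝ) → ℝ)
    (hH : H = fun x z => μ / 2 * ‖x‖ ^ 2 - f x - ∑ i, h i (z i))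
    (xk xk1 : PiLp 2 fun i : Fin m => EuclideanSpace ℝ (Fin (ni i)))
    (hxk : xk ∈ X)
    (ξ : Fin m → ℝ)
    -- ξᵢ is a subgradient of −hᵢ at gᵢ(xᵏᵢ)
    (hξ : ∀ i, ∀ t : ℝ, -h i t ≥ -h i (g i (xk i)) + ξ i * (t - g i (xk i)))
    (yk : PiLp 2 fun i : Fin m => EuclideanSpace ℝ (Fin (ni i)))
    (hyk : yk = μ • xk - gradient f xk)
    -- backtracking condition (5)
    (hback : H xk1 (fun i => g i (xk1 i)) ≥
      H xk (fun i => g i (xk i)) + inner ℝ yk (xk1 - xk) +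
        ∑ i, ξ i * (g i (xk1 i) - g i (xk i)))
    -- (xᵏ⁺¹, g(xᵏ⁺¹)) minimizes the convex subproblem over Ω
    (hmem : (xk1, fun i => g i (xk1 i)) ∈ Ω)
    (hmin : ∀ p ∈ Ω,
      μ / 2 * ‖xk1‖ ^ 2 - inner ℝ yk xk1 - ∑ i, ξ i * g i (xk1 i) ≤
        μ / 2 * ‖p.1‖ ^ 2 - inner ℝ yk p.1 - ∑ i, ξ i * p.2 i) :
    (f xk + ∑ i, h i (g i (xk i))) - (f xk1 + ∑ i, h i (g i (xk1 i))) ≥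
      μ / 2 * ‖xk1 - xk‖ ^ 2 :=
  dca_like_sufficient_decrease_general m ni X hXconv f g hgconv h μ Ω hΩ H hH xk xk1 hxk ξ yk hback
    hmem hmin
end

section
/- Let {r_k} be a nonincreasing nonnegative sequence with r_k^{2θ} ≤ C(r_k − r_{k+1}) for all k ≥ K, where θ ∈ (1/2, 1) and C > 0. Then there exists δ > 0 such that r_k ≤ δ·k^{−1/(2θ−1)} for all large k. -/
/-!
Put `α = 2θ - 1 > 0`. By convexity of `t ↦ t ^ (-α)` (its tangent line inequality), the KL
inequality `r k ^ (1 + α) ≤ C (r k - r (k + 1))` makes `r k ^ (-α)` grow by at least `α / C`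
per step, hence at least linearly in `k`; inverting, `r k = O(k ^ (-1 / α))`.
Once some `r k` vanishes, the KL inequality forces the sequence to stay at `0`.
-/

open Real

namespace Real

/-- Tangent line inequality for the convex function `t ↦ t ^ (-α)` on `(0, ∞)`. -/
lemma rpow_neg_add_mul_sub_div_le {a b α : ℝ} (ha : 0 < a) (hb : 0 < b) (hα : 0 ≤ α) :
    a ^ (-α) + α * (a - b) / a ^ (1 + α) ≤ b ^ (-α) := by
  -- Bernoulli's inequality for `(a / b) ^ (1 + α)`, multiplied by `b / a ^ (1 + α)`.
  have hbern : a / b + α * (a / b - 1) ≤ (a / b) ^ (1 + α) := by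
    have := one_add_mul_self_le_rpow_one_add (s := a / b - 1) (by linarith [div_pos ha hb])
      (p := 1 + α) (by linarith)
    convert this using 1 <;> ring_nf
  rw [div_rpow ha.le hb.le, rpow_add ha, rpow_add hb, rpow_one, rpow_one] at hbern
  rw [rpow_add ha, rpow_one, rpow_neg ha.le, rpow_neg hb.le]
  field_simp at hbern ⊢
  linarith

lemma rpow_neg_add_div_le_of_rpow_one_add_le {a b α C : ℝ} (ha : 0 < a) (hb : 0 < b)
    (hα : 0 ≤ α) (hC : 0 < C) (h : a ^ (1 + α) ≤ C * (a - b)) :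
    a ^ (-α) + α / C ≤ b ^ (-α) := by
  have hgain : α / C ≤ α * (a - b) / a ^ (1 + α) := by
    rw [div_le_div_iff₀ hC (rpow_pos_of_pos ha _)]
    nlinarith [mul_le_mul_of_nonneg_left h hα]
  linarith [rpow_neg_add_mul_sub_div_le ha hb hα]

end Real

lemma mul_div_two_le_of_add_le_succ {u : ℕ → ℝ} {c : ℝ} {K : ℕ} (hu : 0 ≤ u K) (hc : 0 ≤ c)
    (h : ∀ k ≥ K, u k + c ≤ u (k + 1)) {k : ℕ} (hk : 2 * K ≤ k) : k * c / 2 ≤ u k := by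
  have hlin : ∀ k ≥ K, u K + (k - K) * c ≤ u k := by
    intro k hk
    induction k, hk using Nat.le_induction with
    | base => simp
    | succ k hk ih => push_cast; linarith [h k hk]
  have hk' : (2 * K : ℝ) ≤ k := by exact_mod_cast hk
  nlinarith [hlin k (by omega)]

lemma eq_zero_of_ge_of_rpow_le_mul_sub {r : ℕ → ℝ} {p C : ℝ} {K m : ℕ} (hr : ∀ k, 0 ≤ r k)
    (hC : 0 < C) (h : ∀ k ≥ K, r k ^ p ≤ C * (r k - r (k + 1))) (hm : K ≤ m) (hrm : r m = 0)
    {k : ℕ} (hk : m ≤ k) : r k = 0 := by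
  have hanti : AntitoneOn r {k | K ≤ k} := antitoneOn_nat_Ici_of_succ_le fun k hk ↦ by
    nlinarith [h k hk, rpow_nonneg (hr k) p]
  exact le_antisymm (hrm ▸ hanti hm (hm.trans hk) hk) (hr k)

theorem kl_sublinear_rate_general
    (r : ℕ → ℝ) (θ C : ℝ) (K : ℕ)
    (hnonneg : ∀ k, 0 ≤ r k)
    (hθ : 1 / 2 < θ) (hC : 0 < C)
    (hKL : ∀ k ≥ K, (r k) ^ (2 * θ) ≤ C * (r k - r (k + 1))) :
    ∃ δ > 0, ∃ N : ℕ, ∀ k ≥ N, r k ≤ δ * (k : ℝ) ^ (-(1 / (2 * θ - 1))) := by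
  by_cases hzero : ∃ m ≥ K, r m = 0
  · obtain ⟨m, hm, hrm⟩ := hzero
    refine ⟨1, one_pos, m, fun k hk ↦ ?_⟩
    rw [eq_zero_of_ge_of_rpow_le_mul_sub hnonneg hC hKL hm hrm hk]
    positivity
  push Not at hzero
  set α := 2 * θ - 1 with hα
  have hα0 : 0 < α := by linarith
  have hpos : ∀ k ≥ K, 0 < r k := fun k hk ↦ (hnonneg k).lt_of_ne (hzero k hk).symm
  have hstep : ∀ k ≥ K, r k ^ (-α) + α / C ≤ r (k + 1) ^ (-α) := fun k hk ↦
    rpow_neg_add_div_le_of_rpow_one_add_le (hpos k hk) (hpos _ (by omega)) hα0.le hC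
      (by simpa [hα] using hKL k hk)
  refine ⟨(α / C / 2) ^ (-(1 / α)), by positivity, max (2 * K) 1, fun k hk ↦ ?_⟩
  have hk1 : (0 : ℝ) < k := by exact_mod_cast (le_of_max_le_right hk)
  have hgrowth : k * (α / C) / 2 ≤ r k ^ (-α) :=
    mul_div_two_le_of_add_le_succ (rpow_nonneg (hnonneg K) _) (by positivity) hstep
      (le_of_max_le_left hk)
  have hinv : r k ≤ (k * (α / C) / 2) ^ (-α)⁻¹ :=
    (le_rpow_inv_iff_of_neg (hpos k (by omega)) (by positivity) (by linarith)).2 hgrowth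
  calc r k ≤ (k * (α / C) / 2) ^ (-(1 / α)) := by rwa [inv_neg, ← one_div] at hinv
    _ = (α / C / 2) ^ (-(1 / α)) * (k : ℝ) ^ (-(1 / α)) := by
      rw [mul_div_assoc, mul_rpow hk1.le (by positivity), mul_comm]

theorem kl_sublinear_rate
    (r : ℕ → ℝ) (θ C : ℝ) (K : ℕ)
    (hnonneg : ∀ k, 0 ≤ r k)
    (hmono : ∀ k, r (k + 1) ≤ r k)
    (hθ : 1 / 2 < θ) (hθ1 : θ < 1) (hC : 0 < C)
    (hKL : ∀ k ≥ K, (r k) ^ (2 * θ) ≤ C * (r k - r (k + 1))) :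
    ∃ δ > 0, ∃ N : ℕ, ∀ k ≥ N, r k ≤ δ * (k : ℝ) ^ (-(1 / (2 * θ - 1))) :=
  kl_sublinear_rate_general r θ C K hnonneg hθ hC hKL
end

section
/- The function f(x) = log(Σ_{i≠j}(1 + ‖x_i − x_j‖²)^{−1}) on (ℝˢ)ⁿ is differentiable with Lipschitz continuous gradient, and L = 6n√s is a valid Lipschitz constant for ∇f. -/
/-!
Write `f = log g` with `g = ∑_{i ≠ j} k_ij` and `k_ij x = (1 + ‖x_i - x_j‖²)⁻¹`. Since
`‖x_i - x_j‖ ≤ √2 ‖x‖` and `2 r ≤ 1 + r²`, each kernel satisfies the relative bounds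
`‖D k‖ ≤ √2 k` and `‖D² k‖ ≤ 8 k`. Such bounds survive summation, and for `g > 0` they bound the
Hessian `D² g / g - D g ⊗ D g / g²` of `log g` by `8 + 2 = 10 ≤ 6 n √s`; the mean value
inequality then makes `∇ f` Lipschitz. For `s = 0` the space is a point.
-/

open Real Finset

section RelDerivBounds

variable {E : Type*} [NormedAddCommGroup E] [NormedSpace ℝ E]

structure HasRelDerivBounds (w : E → ℝ) (w' : E → E →L[ℝ] ℝ)
    (w'' : E → E →L[ℝ] E →L[ℝ] ℝ) (a b : ℝ) : Prop where
  hasFDerivAt : ∀ x, HasFDerivAt w (w' x) x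
  hasFDerivAt_deriv : ∀ x, HasFDerivAt w' (w'' x) x
  norm_deriv_le : ∀ x, ‖w' x‖ ≤ a * w x
  norm_hessian_le : ∀ x, ‖w'' x‖ ≤ b * w x

namespace HasRelDerivBounds

variable {a b : ℝ}

theorem sum {ι : Type*} (t : Finset ι) {w : ι → E → ℝ} {w' : ι → E → E →L[ℝ] ℝ}
    {w'' : ι → E → E →L[ℝ] E →L[ℝ] ℝ} (h : ∀ i ∈ t, HasRelDerivBounds (w i) (w' i) (w'' i) a b) :
    HasRelDerivBounds (fun x => ∑ i ∈ t, w i x) (fun x => ∑ i ∈ t, w' i x)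
      (fun x => ∑ i ∈ t, w'' i x) a b where
  hasFDerivAt x := HasFDerivAt.fun_sum fun i hi => (h i hi).hasFDerivAt x
  hasFDerivAt_deriv x := HasFDerivAt.fun_sum fun i hi => (h i hi).hasFDerivAt_deriv x
  norm_deriv_le x := by
    rw [mul_sum]
    exact (norm_sum_le _ _).trans (sum_le_sum fun i hi => (h i hi).norm_deriv_le x)
  norm_hessian_le x := by
    rw [mul_sum]
    exact (norm_sum_le t fun i => w'' i x).trans
      (sum_le_sum fun i hi => (h i hi).norm_hessian_le x)

variable {w : E → ℝ} {w' : E → E →L[ℝ] ℝ} {w'' : E → E →L[ℝ] E →L[ℝ] ℝ}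

theorem hasFDerivAt_logDeriv (h : HasRelDerivBounds w w' w'' a b) {x : E} (hx : w x ≠ 0) :
    HasFDerivAt (fun y => (w y)⁻¹ • w' y)
      ((w x)⁻¹ • w'' x + (-(w x ^ 2)⁻¹ • w' x).smulRight (w' x)) x :=
  ((hasDerivAt_inv hx).comp_hasFDerivAt x (h.hasFDerivAt x)).smul (h.hasFDerivAt_deriv x)

theorem norm_hessian_log_le (h : HasRelDerivBounds w w' w'' a b) {x : E} (hx : 0 < w x) :
    ‖(w x)⁻¹ • w'' x + (-(w x ^ 2)⁻¹ • w' x).smulRight (w' x)‖ ≤ b + a ^ 2 := by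
  have ha : 0 ≤ a * w x := (norm_nonneg _).trans (h.norm_deriv_le x)
  have hw'' : ‖(w x)⁻¹ • w'' x‖ ≤ (w x)⁻¹ * (b * w x) := by
    refine ((w'' x).opNorm_smul_le _).trans ?_
    rw [norm_inv, Real.norm_of_nonneg hx.le]
    gcongr
    exact h.norm_hessian_le x
  have hw' :
      ‖(-(w x ^ 2)⁻¹ • w' x).smulRight (w' x)‖ ≤ (w x ^ 2)⁻¹ * (a * w x) * (a * w x) := by
    rw [ContinuousLinearMap.norm_smulRight_apply, norm_smul, norm_neg, norm_inv, norm_pow,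
      Real.norm_of_nonneg hx.le]
    gcongr <;> exact h.norm_deriv_le x
  calc _ ≤ (w x)⁻¹ * (b * w x) + (w x ^ 2)⁻¹ * (a * w x) * (a * w x) :=
        (norm_add_le ((w x)⁻¹ • w'' x) _).trans (add_le_add hw'' hw')
    _ = b + a ^ 2 := by field_simp

theorem lipschitzWith_logDeriv (h : HasRelDerivBounds w w' w'' a b) (hw : ∀ x, 0 < w x)
    {K : NNReal} (hK : b + a ^ 2 ≤ K) : LipschitzWith K (fun x => (w x)⁻¹ • w' x) := by
  rw [← lipschitzOnWith_univ]
  refine convex_univ.lipschitzOnWith_of_nnnorm_hasFDerivWithin_le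
    (fun x _ => (h.hasFDerivAt_logDeriv (hw x).ne').hasFDerivWithinAt) fun x _ => ?_
  rw [← NNReal.coe_le_coe, coe_nnnorm]
  exact (h.norm_hessian_log_le (hw x)).trans hK

end HasRelDerivBounds

end RelDerivBounds

theorem lipschitzWith_gradient_of_hasFDerivAt {F : Type*} [NormedAddCommGroup F]
    [InnerProductSpace ℝ F] [CompleteSpace F] {f : F → ℝ} {f' : F → F →L[ℝ] ℝ} {K : NNReal}
    (hf : ∀ x, HasFDerivAt f (f' x) x) (hK : LipschitzWith K f') :
    LipschitzWith K (gradient f) := by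
  have : gradient f = fun x => (InnerProductSpace.toDual ℝ F).symm (f' x) :=
    funext fun x => by rw [gradient, (hf x).fderiv]
  rw [this, ← one_mul K]
  exact (InnerProductSpace.toDual ℝ F).symm.lipschitz.comp hK

noncomputable section CauchyKernel

variable {E F : Type*} [NormedAddCommGroup E] [NormedSpace ℝ E] [NormedAddCommGroup F]
  [InnerProductSpace ℝ F] (A : E →L[ℝ] F)

def normSqHessian : E →L[ℝ] E →L[ℝ] ℝ := 2 • (innerSL ℝ).bilinearComp A A

@[simp]
theorem normSqHessian_apply (x u : E) : normSqHessian A x u = 2 * inner ℝ (A x) (A u) := by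
  simp [normSqHessian]

theorem hasFDerivAt_norm_sq_comp (x : E) :
    HasFDerivAt (fun y => ‖A y‖ ^ 2) (normSqHessian A x) x :=
  A.hasFDerivAt.norm_sq.congr_fderiv (by ext u; simp)

variable {A} {c : ℝ}

theorem norm_normSqHessian_apply_le (hA : ‖A‖ ≤ c) (x : E) :
    ‖normSqHessian A x‖ ≤ 2 * c * ‖A x‖ := by
  have hc : 0 ≤ c := (norm_nonneg A).trans hA
  refine ContinuousLinearMap.opNorm_le_bound _ (by positivity) fun u => ?_
  calc ‖normSqHessian A x u‖ ≤ 2 * (‖A x‖ * ‖A u‖) := by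
        rw [normSqHessian_apply, norm_mul, Real.norm_two]
        gcongr
        exact norm_inner_le_norm _ _
    _ ≤ 2 * (‖A x‖ * (c * ‖u‖)) := by gcongr; exact A.le_of_opNorm_le hA u
    _ = 2 * c * ‖A x‖ * ‖u‖ := by ring

theorem norm_normSqHessian_le (hA : ‖A‖ ≤ c) : ‖normSqHessian A‖ ≤ 2 * c ^ 2 := by
  have hc : 0 ≤ c := (norm_nonneg A).trans hA
  refine ContinuousLinearMap.opNorm_le_bound _ (by positivity) fun x => ?_
  calc ‖normSqHessian A x‖ ≤ 2 * c * ‖A x‖ := norm_normSqHessian_apply_le hA x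
    _ ≤ 2 * c * (c * ‖x‖) := by gcongr; exact A.le_of_opNorm_le hA x
    _ = 2 * c ^ 2 * ‖x‖ := by ring

variable (A)

def cauchyKernel (x : E) : ℝ := (1 + ‖A x‖ ^ 2)⁻¹

theorem cauchyKernel_pos (x : E) : 0 < cauchyKernel A x := by
  unfold cauchyKernel; positivity

theorem cauchyKernel_le_one (x : E) : cauchyKernel A x ≤ 1 :=
  inv_le_one_of_one_le₀ (le_add_of_nonneg_right (sq_nonneg _))

theorem two_mul_norm_mul_cauchyKernel_le_one (x : E) : 2 * ‖A x‖ * cauchyKernel A x ≤ 1 := by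
  rw [cauchyKernel, ← div_eq_mul_inv, div_le_one (by positivity)]
  nlinarith [sq_nonneg (‖A x‖ - 1)]

theorem hasFDerivAt_cauchyKernel (x : E) :
    HasFDerivAt (cauchyKernel A) (-cauchyKernel A x ^ 2 • normSqHessian A x) x := by
  refine ((hasDerivAt_inv ?_).comp_hasFDerivAt x
    ((hasFDerivAt_norm_sq_comp A x).const_add 1)).congr_fderiv ?_
  · positivity
  · rw [cauchyKernel, inv_pow]

theorem hasFDerivAt_deriv_cauchyKernel (x : E) :
    HasFDerivAt (fun y => -cauchyKernel A y ^ 2 • normSqHessian A y)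
      (-cauchyKernel A x ^ 2 • normSqHessian A +
        (2 * cauchyKernel A x ^ 3) • (normSqHessian A x).smulRight (normSqHessian A x)) x := by
  refine (((hasFDerivAt_cauchyKernel A x).pow 2).neg.smul
    (normSqHessian A).hasFDerivAt).congr_fderiv ?_
  ext u v
  simp
  ring

variable {A} in
theorem hasRelDerivBounds_cauchyKernel (hA : ‖A‖ ≤ c) :
    HasRelDerivBounds (cauchyKernel A) (fun x => -cauchyKernel A x ^ 2 • normSqHessian A x)
      (fun x => -cauchyKernel A x ^ 2 • normSqHessian A +
        (2 * cauchyKernel A x ^ 3) • (normSqHessian A x).smulRight (normSqHessian A x))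
      c (4 * c ^ 2) where
  hasFDerivAt := hasFDerivAt_cauchyKernel A
  hasFDerivAt_deriv := hasFDerivAt_deriv_cauchyKernel A
  norm_deriv_le x := by
    have hc : 0 ≤ c := (norm_nonneg A).trans hA
    have hk := cauchyKernel_pos A x
    calc ‖-cauchyKernel A x ^ 2 • normSqHessian A x‖
        = cauchyKernel A x ^ 2 * ‖normSqHessian A x‖ := by
          rw [norm_smul, norm_neg, norm_pow, Real.norm_of_nonneg hk.le]
      _ ≤ cauchyKernel A x ^ 2 * (2 * c * ‖A x‖) := by
          gcongr; exact norm_normSqHessian_apply_le hA x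
      _ = c * cauchyKernel A x * (2 * ‖A x‖ * cauchyKernel A x) := by ring
      _ ≤ c * cauchyKernel A x * 1 := by
          gcongr; exact two_mul_norm_mul_cauchyKernel_le_one A x
      _ = c * cauchyKernel A x := mul_one _
  norm_hessian_le x := by
    have hc : 0 ≤ c := (norm_nonneg A).trans hA
    have hk := cauchyKernel_pos A x
    have hk1 := cauchyKernel_le_one A x
    have hr := two_mul_norm_mul_cauchyKernel_le_one A x
    calc _ ≤ cauchyKernel A x ^ 2 * ‖normSqHessian A‖ +
          2 * cauchyKernel A x ^ 3 * (‖normSqHessian A x‖ * ‖normSqHessian A x‖) := by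
          refine (norm_add_le (-cauchyKernel A x ^ 2 • normSqHessian A) _).trans
            (add_le_add ?_ ?_)
          · refine (ContinuousLinearMap.opNorm_smul_le _ _).trans_eq ?_
            rw [norm_neg, norm_pow, Real.norm_of_nonneg hk.le]
          · refine (ContinuousLinearMap.opNorm_smul_le _ _).trans_eq ?_
            rw [ContinuousLinearMap.norm_smulRight_apply, Real.norm_of_nonneg (by positivity)]
      _ ≤ cauchyKernel A x ^ 2 * (2 * c ^ 2) +
          2 * cauchyKernel A x ^ 3 * ((2 * c * ‖A x‖) * (2 * c * ‖A x‖)) := by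
          gcongr
          exacts [norm_normSqHessian_le hA, norm_normSqHessian_apply_le hA x,
            norm_normSqHessian_apply_le hA x]
      _ = 2 * c ^ 2 * cauchyKernel A x *
            (cauchyKernel A x + (2 * ‖A x‖ * cauchyKernel A x) ^ 2) := by ring
      _ ≤ 2 * c ^ 2 * cauchyKernel A x * (1 + 1 ^ 2) := by gcongr
      _ = 4 * c ^ 2 * cauchyKernel A x := by ring

end CauchyKernel

noncomputable section RowDiff

variable {ι κ : Type*} [Fintype ι] [Fintype κ]

def rowDiff (i j : ι) : EuclideanSpace ℝ (ι × κ) →L[ℝ] EuclideanSpace ℝ κ :=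
  LinearMap.toContinuousLinearMap
    { toFun x := WithLp.toLp 2 fun k => x (i, k) - x (j, k)
      map_add' x y := by ext k; simp only [PiLp.add_apply]; ring
      map_smul' c x := by
        ext k; simp only [PiLp.smul_apply, smul_eq_mul, RingHom.id_apply]; ring }

theorem norm_rowDiff_apply_sq (i j : ι) (x : EuclideanSpace ℝ (ι × κ)) :
    ‖rowDiff i j x‖ ^ 2 = ∑ k, (x (i, k) - x (j, k)) ^ 2 := by
  simp [EuclideanSpace.norm_sq_eq, rowDiff]

theorem norm_rowDiff_le {i j : ι} (hij : i ≠ j) : ‖rowDiff (κ := κ) i j‖ ≤ √2 := by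
  classical
  refine ContinuousLinearMap.opNorm_le_bound _ (by positivity) fun x => ?_
  have hrows : ∑ k, (x (i, k) ^ 2 + x (j, k) ^ 2) ≤ ‖x‖ ^ 2 := by
    rw [EuclideanSpace.norm_sq_eq, Fintype.sum_prod_type, sum_add_distrib,
      ← sum_pair (f := fun a => ∑ k, x (a, k) ^ 2) hij]
    simp only [Real.norm_eq_abs, sq_abs]
    exact sum_le_univ_sum_of_nonneg fun a => sum_nonneg fun k _ => sq_nonneg _
  refine (sq_le_sq₀ (norm_nonneg _) (by positivity)).1 ?_
  calc ‖rowDiff i j x‖ ^ 2 = ∑ k, (x (i, k) - x (j, k)) ^ 2 := norm_rowDiff_apply_sq i j x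
    _ ≤ ∑ k, 2 * (x (i, k) ^ 2 + x (j, k) ^ 2) :=
        sum_le_sum fun k _ => by nlinarith [sq_nonneg (x (i, k) + x (j, k))]
    _ ≤ (√2 * ‖x‖) ^ 2 := by
        rw [← mul_sum, mul_pow, sq_sqrt zero_le_two]
        gcongr

end RowDiff

theorem tsne_smooth_part_lipschitz_gradient
    (n s : ℕ) (hn : 2 ≤ n)
    (f : EuclideanSpace ℝ (Fin n × Fin s) → ℝ)
    (hf : f = fun x => Real.log
      (∑ p ∈ Finset.univ.filter (fun p : Fin n × Fin n => p.1 ≠ p.2),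
        (1 + ∑ k : Fin s, (x (p.1, k) - x (p.2, k)) ^ 2)⁻¹)) :
    Differentiable ℝ f ∧
      LipschitzWith (Real.toNNReal (6 * n * Real.sqrt s)) (gradient f) := by
  set P := univ.filter fun p : Fin n × Fin n => p.1 ≠ p.2
  have hbounds := HasRelDerivBounds.sum P fun p hp =>
    hasRelDerivBounds_cauchyKernel (A := rowDiff (κ := Fin s) p.1 p.2)
      (norm_rowDiff_le (mem_filter.1 hp).2)
  have hpos (x : EuclideanSpace ℝ (Fin n × Fin s)) :
      0 < ∑ p ∈ P, cauchyKernel (rowDiff p.1 p.2) x :=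
    sum_pos (fun p _ => cauchyKernel_pos _ x) ⟨(⟨0, by omega⟩, ⟨1, by omega⟩), by simp [P]⟩
  obtain rfl : f = fun x => log (∑ p ∈ P, cauchyKernel (rowDiff p.1 p.2) x) := by
    simp only [hf, cauchyKernel, norm_rowDiff_apply_sq]
  have hderiv x := (hbounds.hasFDerivAt x).log (hpos x).ne'
  refine ⟨fun x => (hderiv x).differentiableAt, lipschitzWith_gradient_of_hasFDerivAt hderiv ?_⟩
  rcases s.eq_zero_or_pos with rfl | hs
  · exact LipschitzWith.of_dist_le_mul fun x y => by simp [Subsingleton.elim x y]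
  · refine hbounds.lipschitzWith_logDeriv hpos ?_
    have hs1 : 1 ≤ √(s : ℝ) := one_le_sqrt.2 (by exact_mod_cast hs)
    have hn2 : (2 : ℝ) ≤ n := by exact_mod_cast hn
    rw [coe_toNNReal _ (by positivity), sq_sqrt zero_le_two]
    nlinarith
end
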